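/- arXiv:2111.07582 — 9 statements merged into one kernel-verified Lean document; each statement's English description precedes it below -/
import Mathlib

section
/- Let t, q : ℝ³ → ℝ² be smooth time-dependent planar vector fields, written t(x,y,τ), q(x,y,τ). Suppose that ∂_τ t + (q·∇)t = (t·∇)q holds everywhere (where ∇ acts on the spatial variables (x,y)) and that the spatial divergence of q vanishes everywhere, div q = 0. Then the spatial divergence of t is convected with the flow: ∂_τ(div t) + q·∇(div t) = 0 everywhere. -/
noncomputable section

/-- Partial derivative with respect to the first spatial coordinate `x`. -/
def px (f : ℝ × ℝ × ℝ → ℝ) (p : ℝ × ℝ × ℝ) : ℝ := fderiv ℝ f p (1, 0, 0)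
/-- Partial derivative with respect to the second spatial coordinate `y`. -/
def py (f : ℝ × ℝ × ℝ → ℝ) (p : ℝ × ℝ × ℝ) : ℝ := fderiv ℝ f p (0, 1, 0)
/-- Partial derivative with respect to time `τ`. -/
def pt (f : ℝ × ℝ × ℝ → ℝ) (p : ℝ × ℝ × ℝ) : ℝ := fderiv ℝ f p (0, 0, 1)

private lemma contDiff_pd {f : ℝ × ℝ × ℝ → ℝ} (hf : ContDiff ℝ (⊤ : ℕ∞) f) (v : ℝ × ℝ × ℝ) :
    ContDiff ℝ (⊤ : ℕ∞) (fun p => fderiv ℝ f p v) :=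
  (ContinuousLinearMap.apply ℝ ℝ v).contDiff.comp (hf.fderiv_right (by simp))

private lemma pd_add {f g : ℝ × ℝ × ℝ → ℝ} (hf : ContDiff ℝ (⊤ : ℕ∞) f) (hg : ContDiff ℝ (⊤ : ℕ∞) g)
    (p v : ℝ × ℝ × ℝ) :
    fderiv ℝ (fun p => f p + g p) p v = fderiv ℝ f p v + fderiv ℝ g p v := by
  rw [fderiv_fun_add ((hf.differentiable (by simp)).differentiableAt)
    ((hg.differentiable (by simp)).differentiableAt)]; rfl

private lemma pd_mul {f g : ℝ × ℝ × ℝ → ℝ} (hf : ContDiff ℝ (⊤ : ℕ∞) f) (hg : ContDiff ℝ (⊤ : ℕ∞) g)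
    (p v : ℝ × ℝ × ℝ) :
    fderiv ℝ (fun p => f p * g p) p v = f p * fderiv ℝ g p v + fderiv ℝ f p v * g p := by
  rw [fderiv_fun_mul ((hf.differentiable (by simp)).differentiableAt)
    ((hg.differentiable (by simp)).differentiableAt)]; simp; ring

private lemma pd_swap {f : ℝ × ℝ × ℝ → ℝ} (hf : ContDiff ℝ (⊤ : ℕ∞) f) (p u v : ℝ × ℝ × ℝ) :
    fderiv ℝ (fun q => fderiv ℝ f q u) p v = fderiv ℝ (fun q => fderiv ℝ f q v) p u := by
  have hdd : ∀ x, HasFDerivAt f (fderiv ℝ f x) x :=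
    fun x => ((hf.differentiable (by simp)) x).hasFDerivAt
  have h2 : HasFDerivAt (fderiv ℝ f) (fderiv ℝ (fderiv ℝ f) p) p :=
    (((hf.fderiv_right (m := (⊤ : ℕ∞)) (by simp)).differentiable (by simp)) p).hasFDerivAt
  have key : ∀ w : ℝ × ℝ × ℝ, fderiv ℝ (fun q => fderiv ℝ f q w) p
      = (ContinuousLinearMap.apply ℝ ℝ w).comp (fderiv ℝ (fderiv ℝ f) p) := by
    intro w
    exact ((ContinuousLinearMap.apply ℝ ℝ w).hasFDerivAt.comp p h2).fderiv
  rw [key u, key v]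
  exact second_derivative_symmetric hdd h2 v u

private lemma pd_eq {f g : ℝ × ℝ × ℝ → ℝ} (h : ∀ p, f p = g p) (p v : ℝ × ℝ × ℝ) :
    fderiv ℝ f p v = fderiv ℝ g p v := by
  rw [funext h]

theorem divergence_convected
    (t1 t2 q1 q2 : ℝ × ℝ × ℝ → ℝ)
    (ht1 : ContDiff ℝ (⊤ : ℕ∞) t1) (ht2 : ContDiff ℝ (⊤ : ℕ∞) t2)
    (hq1 : ContDiff ℝ (⊤ : ℕ∞) q1) (hq2 : ContDiff ℝ (⊤ : ℕ∞) q2)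
    (hconv1 : ∀ p, pt t1 p + (q1 p * px t1 p + q2 p * py t1 p)
      = t1 p * px q1 p + t2 p * py q1 p)
    (hconv2 : ∀ p, pt t2 p + (q1 p * px t2 p + q2 p * py t2 p)
      = t1 p * px q2 p + t2 p * py q2 p)
    (hdiv : ∀ p, px q1 p + py q2 p = 0) :
    ∀ p, pt (fun p => px t1 p + py t2 p) p
      + (q1 p * px (fun p => px t1 p + py t2 p) p
        + q2 p * py (fun p => px t1 p + py t2 p) p) = 0 := by
  intro p
  simp only [px, py, pt] at hconv1 hconv2 hdiv ⊢
  have h1 := pd_eq hconv1 p (1,0,0)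
  have h2 := pd_eq hconv2 p (0,1,0)
  have hdx := pd_eq hdiv p (1,0,0)
  have hdy := pd_eq hdiv p (0,1,0)
  simp only [pd_add (contDiff_pd ht1 (0,0,1))
      ((hq1.mul (contDiff_pd ht1 (1,0,0))).add (hq2.mul (contDiff_pd ht1 (0,1,0)))),
    pd_add (hq1.mul (contDiff_pd ht1 (1,0,0))) (hq2.mul (contDiff_pd ht1 (0,1,0))),
    pd_mul hq1 (contDiff_pd ht1 (1,0,0)), pd_mul hq2 (contDiff_pd ht1 (0,1,0)),
    pd_add (ht1.mul (contDiff_pd hq1 (1,0,0))) (ht2.mul (contDiff_pd hq1 (0,1,0))),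
    pd_mul ht1 (contDiff_pd hq1 (1,0,0)), pd_mul ht2 (contDiff_pd hq1 (0,1,0))] at h1
  simp only [pd_add (contDiff_pd ht2 (0,0,1))
      ((hq1.mul (contDiff_pd ht2 (1,0,0))).add (hq2.mul (contDiff_pd ht2 (0,1,0)))),
    pd_add (hq1.mul (contDiff_pd ht2 (1,0,0))) (hq2.mul (contDiff_pd ht2 (0,1,0))),
    pd_mul hq1 (contDiff_pd ht2 (1,0,0)), pd_mul hq2 (contDiff_pd ht2 (0,1,0)),
    pd_add (ht1.mul (contDiff_pd hq2 (1,0,0))) (ht2.mul (contDiff_pd hq2 (0,1,0))),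
    pd_mul ht1 (contDiff_pd hq2 (1,0,0)), pd_mul ht2 (contDiff_pd hq2 (0,1,0))] at h2
  simp only [pd_add (contDiff_pd hq1 (1,0,0)) (contDiff_pd hq2 (0,1,0)),
    fderiv_const_apply, ContinuousLinearMap.zero_apply] at hdx hdy
  simp only [pd_add (contDiff_pd ht1 (1,0,0)) (contDiff_pd ht2 (0,1,0))]
  rw [pd_swap ht1 p (0,0,1) (1,0,0), pd_swap ht1 p (0,1,0) (1,0,0),
    pd_swap hq1 p (0,1,0) (1,0,0)] at h1
  rw [pd_swap ht2 p (0,0,1) (0,1,0), pd_swap ht2 p (1,0,0) (0,1,0),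
    pd_swap hq2 p (1,0,0) (0,1,0)] at h2
  linear_combination h1 + h2 + t1 p * hdx + t2 p * hdy

end
end

section
/- Let φ, v, w : ℝ³ → ℝ be smooth, set t = (cos φ, sin φ), n = (−sin φ, cos φ), q = v·t + w·n, κ = D_s φ and θ = D_n φ. Then the fibre-convection equation ∂_τ t + (q·∇)t = (t·∇)q holds everywhere if and only if the two equations D_s w = ∂_τ φ + θ·w and D_s v = κ·w hold everywhere. -/
noncomputable section

def Ds (φ f : ℝ × ℝ × ℝ → ℝ) (p : ℝ × ℝ × ℝ) : ℝ :=
  Real.cos (φ p) * px f p + Real.sin (φ p) * py f p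

def Dn (φ f : ℝ × ℝ × ℝ → ℝ) (p : ℝ × ℝ × ℝ) : ℝ :=
  -Real.sin (φ p) * px f p + Real.cos (φ p) * py f p

private lemma fd_cos {φ : ℝ × ℝ × ℝ → ℝ} (hφ : ContDiff ℝ (⊤ : ℕ∞) φ) (p u : ℝ × ℝ × ℝ) :
    fderiv ℝ (fun q => Real.cos (φ q)) p u = -Real.sin (φ p) * fderiv ℝ φ p u := by
  have h := (hφ.differentiable (by simp) p).hasFDerivAt
  rw [h.cos.fderiv]
  simp

private lemma fd_sin {φ : ℝ × ℝ × ℝ → ℝ} (hφ : ContDiff ℝ (⊤ : ℕ∞) φ) (p u : ℝ × ℝ × ℝ) :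
    fderiv ℝ (fun q => Real.sin (φ q)) p u = Real.cos (φ p) * fderiv ℝ φ p u := by
  have h := (hφ.differentiable (by simp) p).hasFDerivAt
  rw [h.sin.fderiv]
  simp

private lemma fd_q1 {φ v w : ℝ × ℝ × ℝ → ℝ} (hφ : ContDiff ℝ (⊤ : ℕ∞) φ) (hv : ContDiff ℝ (⊤ : ℕ∞) v)
    (hw : ContDiff ℝ (⊤ : ℕ∞) w) (p u : ℝ × ℝ × ℝ) :
    fderiv ℝ (fun q => v q * Real.cos (φ q) - w q * Real.sin (φ q)) p u
      = fderiv ℝ v p u * Real.cos (φ p) - v p * (Real.sin (φ p) * fderiv ℝ φ p u)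
        - fderiv ℝ w p u * Real.sin (φ p) - w p * (Real.cos (φ p) * fderiv ℝ φ p u) := by
  have hφ' := (hφ.differentiable (by simp) p).hasFDerivAt
  have hv' := (hv.differentiable (by simp) p).hasFDerivAt
  have hw' := (hw.differentiable (by simp) p).hasFDerivAt
  rw [((hv'.fun_mul hφ'.cos).fun_sub (hw'.fun_mul hφ'.sin)).fderiv]
  simp [ContinuousLinearMap.sub_apply, ContinuousLinearMap.add_apply,
    ContinuousLinearMap.smul_apply, smul_eq_mul]
  ring

private lemma fd_q2 {φ v w : ℝ × ℝ × ℝ → ℝ} (hφ : ContDiff ℝ (⊤ : ℕ∞) φ) (hv : ContDiff ℝ (⊤ : ℕ∞) v)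
    (hw : ContDiff ℝ (⊤ : ℕ∞) w) (p u : ℝ × ℝ × ℝ) :
    fderiv ℝ (fun q => v q * Real.sin (φ q) + w q * Real.cos (φ q)) p u
      = fderiv ℝ v p u * Real.sin (φ p) + v p * (Real.cos (φ p) * fderiv ℝ φ p u)
        + fderiv ℝ w p u * Real.cos (φ p) - w p * (Real.sin (φ p) * fderiv ℝ φ p u) := by
  have hφ' := (hφ.differentiable (by simp) p).hasFDerivAt
  have hv' := (hv.differentiable (by simp) p).hasFDerivAt
  have hw' := (hw.differentiable (by simp) p).hasFDerivAt
  rw [((hv'.fun_mul hφ'.sin).fun_add (hw'.fun_mul hφ'.cos)).fderiv]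
  simp [ContinuousLinearMap.sub_apply, ContinuousLinearMap.add_apply,
    ContinuousLinearMap.smul_apply, smul_eq_mul]
  ring

theorem fibre_convection_iff (φ v w : ℝ × ℝ × ℝ → ℝ)
    (hφ : ContDiff ℝ (⊤ : ℕ∞) φ) (hv : ContDiff ℝ (⊤ : ℕ∞) v) (hw : ContDiff ℝ (⊤ : ℕ∞) w) :
    -- q = v t + w n componentwise
    (∀ p,
      (pt (fun p => Real.cos (φ p)) p
        + ((fun p => v p * Real.cos (φ p) - w p * Real.sin (φ p)) p
            * px (fun p => Real.cos (φ p)) p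
          + (fun p => v p * Real.sin (φ p) + w p * Real.cos (φ p)) p
            * py (fun p => Real.cos (φ p)) p)
        = Real.cos (φ p)
            * px (fun p => v p * Real.cos (φ p) - w p * Real.sin (φ p)) p
          + Real.sin (φ p)
            * py (fun p => v p * Real.cos (φ p) - w p * Real.sin (φ p)) p)
      ∧ (pt (fun p => Real.sin (φ p)) p
        + ((fun p => v p * Real.cos (φ p) - w p * Real.sin (φ p)) p
            * px (fun p => Real.sin (φ p)) p
          + (fun p => v p * Real.sin (φ p) + w p * Real.cos (φ p)) p
            * py (fun p => Real.sin (φ p)) p)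
        = Real.cos (φ p)
            * px (fun p => v p * Real.sin (φ p) + w p * Real.cos (φ p)) p
          + Real.sin (φ p)
            * py (fun p => v p * Real.sin (φ p) + w p * Real.cos (φ p)) p))
    ↔ (∀ p, Ds φ w p = pt φ p + Dn φ φ p * w p ∧ Ds φ v p = Ds φ φ p * w p) := by
  refine forall_congr' fun p => ?_
  have pyth : Real.sin (φ p) ^ 2 + Real.cos (φ p) ^ 2 = 1 := Real.sin_sq_add_cos_sq _
  simp only [px, py, pt, Ds, Dn, fd_cos hφ, fd_sin hφ, fd_q1 hφ hv hw, fd_q2 hφ hv hw]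
  set c := Real.cos (φ p) with hc
  set s := Real.sin (φ p) with hs
  constructor
  · rintro ⟨h1, h2⟩
    constructor
    · linear_combination s * h1 - c * h2 -
        (c * fderiv ℝ w p (1,0,0) + s * fderiv ℝ w p (0,1,0) - fderiv ℝ φ p (0,0,1)
          - (-s * fderiv ℝ φ p (1,0,0) + c * fderiv ℝ φ p (0,1,0)) * w p) * pyth
    · linear_combination (-c) * h1 - s * h2 -
        (c * fderiv ℝ v p (1,0,0) + s * fderiv ℝ v p (0,1,0)
          - (c * fderiv ℝ φ p (1,0,0) + s * fderiv ℝ φ p (0,1,0)) * w p) * pyth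
  · rintro ⟨h1, h2⟩
    constructor
    · linear_combination s * h1 - c * h2
    · linear_combination (-c) * h1 - s * h2
end
end

section
/- Let φ, w, ρ : ℝ³ → ℝ be smooth with κ = D_s φ and θ = D_n φ. Suppose D_s ρ = 1 everywhere and D_s w = ∂_τ φ + θ·w everywhere, and define v = −w·(D_n ρ) − ∂_τ ρ. Then D_s v = κ·w everywhere. -/
noncomputable section

private lemma fderiv_dir (f : ℝ × ℝ × ℝ → ℝ) (p : ℝ × ℝ × ℝ) (a b : ℝ) :
    fderiv ℝ f p (a, b, 0) = a * px f p + b * py f p := by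
  have h : ((a, b, 0) : ℝ × ℝ × ℝ) = a • ((1, 0, 0) : ℝ × ℝ × ℝ) + b • ((0, 1, 0) : ℝ × ℝ × ℝ) := by
    simp [Prod.ext_iff]
  rw [h, map_add, map_smul, map_smul]
  simp [px, py, smul_eq_mul]

private lemma Ds_eq (φ f : ℝ × ℝ × ℝ → ℝ) (p : ℝ × ℝ × ℝ) :
    Ds φ f p = fderiv ℝ f p (Real.cos (φ p), Real.sin (φ p), 0) := by
  rw [fderiv_dir]; rfl

private lemma Dn_eq (φ f : ℝ × ℝ × ℝ → ℝ) (p : ℝ × ℝ × ℝ) :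
    Dn φ f p = fderiv ℝ f p (-Real.sin (φ p), Real.cos (φ p), 0) := by
  rw [fderiv_dir]
  unfold Dn
  ring

theorem third_equation_automatic (φ w ρ : ℝ × ℝ × ℝ → ℝ)
    (hφ : ContDiff ℝ (⊤ : ℕ∞) φ) (hw : ContDiff ℝ (⊤ : ℕ∞) w) (hρ : ContDiff ℝ (⊤ : ℕ∞) ρ)
    (hρs : ∀ p, Ds φ ρ p = 1)
    (hws : ∀ p, Ds φ w p = pt φ p + Dn φ φ p * w p) :
    ∀ p, Ds φ (fun p => -(w p * Dn φ ρ p) - pt ρ p) p = Ds φ φ p * w p := by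
  intro p
  have hφd : Differentiable ℝ φ := hφ.differentiable (by simp)
  have hwd : Differentiable ℝ w := hw.differentiable (by simp)
  have hρd : Differentiable ℝ ρ := hρ.differentiable (by simp)
  set c := Real.cos (φ p) with hc
  set s := Real.sin (φ p) with hs
  set sp : ℝ × ℝ × ℝ := (c, s, 0) with hsp
  set np : ℝ × ℝ × ℝ := (-s, c, 0) with hnp
  set e3 : ℝ × ℝ × ℝ := (0, 0, 1) with he3
  set A := fderiv ℝ φ p with hA
  set W := fderiv ℝ w p with hW
  set h := fun q => fderiv ℝ ρ q with hh
  have hhcd : ContDiff ℝ (⊤ : ℕ∞) h := hρ.fderiv_right (by simp)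
  set B := fderiv ℝ h p with hB
  have hhB : HasFDerivAt h B p := (hhcd.differentiable (by simp) p).hasFDerivAt
  have hAp : HasFDerivAt φ A p := (hφd p).hasFDerivAt
  have hWp : HasFDerivAt w W p := (hwd p).hasFDerivAt
  -- symmetry of second derivative
  have hsymm : ∀ u v, B u v = B v u := fun u v =>
    second_derivative_symmetric (fun y => (hρd y).hasFDerivAt) hhB u v
  -- the tangent direction field m q = (cos φ q, sin φ q, 0)
  have hm : HasFDerivAt (fun q => ((Real.cos (φ q), Real.sin (φ q), 0) : ℝ × ℝ × ℝ))
      (((-s) • A).prod ((c • A).prod 0)) p :=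
    (hAp.cos).prodMk ((hAp.sin).prodMk (hasFDerivAt_const 0 p))
  -- the normal direction field n q = (-sin φ q, cos φ q, 0)
  have hn : HasFDerivAt (fun q => ((-Real.sin (φ q), Real.cos (φ q), 0) : ℝ × ℝ × ℝ))
      ((-(c • A)).prod (((-s) • A).prod 0)) p :=
    (hAp.sin.neg).prodMk ((hAp.cos).prodMk (hasFDerivAt_const 0 p))
  -- the function q ↦ Ds φ ρ q, written as h q (m q), is constant 1
  have hG : HasFDerivAt (fun q => h q ((Real.cos (φ q), Real.sin (φ q), 0) : ℝ × ℝ × ℝ))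
      ((h p).comp (((-s) • A).prod ((c • A).prod 0)) + B.flip sp) p := hhB.clm_apply hm
  have hGconst : (fun q => h q ((Real.cos (φ q), Real.sin (φ q), 0) : ℝ × ℝ × ℝ)) =
      fun _ => (1 : ℝ) := by
    funext q
    rw [← Ds_eq φ ρ q, hρs q]
  have hGzero : ((h p).comp (((-s) • A).prod ((c • A).prod 0)) + B.flip sp) = 0 := by
    have := hG.fderiv
    rw [hGconst, fderiv_const_apply] at this
    simpa using this.symm
  -- key identity : B u sp = -(A u) * h p np
  have key : ∀ u, B u sp = -(A u * h p np) := by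
    intro u
    have := congrFun (congrArg (fun (L : (ℝ × ℝ × ℝ) →L[ℝ] ℝ) => (L : (ℝ × ℝ × ℝ) → ℝ)) hGzero) u
    simp only [ContinuousLinearMap.add_apply, ContinuousLinearMap.comp_apply,
      ContinuousLinearMap.prod_apply, ContinuousLinearMap.smul_apply,
      ContinuousLinearMap.zero_apply, ContinuousLinearMap.flip_apply,
      ContinuousLinearMap.coe_zero, Pi.zero_apply, smul_eq_mul] at this
    have hmu : ((-s * A u, (c * A u, (0:ℝ))) : ℝ × ℝ × ℝ) = (A u) • np := by
      refine Prod.ext ?_ (Prod.ext ?_ ?_) <;> simp [hnp] <;> ring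
    rw [hmu, map_smul, smul_eq_mul] at this
    linarith
  -- derivative of q ↦ Dn φ ρ q = h q (n q)
  have hg : HasFDerivAt (fun q => h q ((-Real.sin (φ q), Real.cos (φ q), 0) : ℝ × ℝ × ℝ))
      ((h p).comp ((-(c • A)).prod (((-s) • A).prod 0)) + B.flip np) p := hhB.clm_apply hn
  -- derivative of q ↦ pt ρ q = h q e3
  have hpt : HasFDerivAt (fun q => h q e3)
      ((h p).comp (0 : (ℝ × ℝ × ℝ) →L[ℝ] ℝ × ℝ × ℝ) + B.flip e3) p :=
    hhB.clm_apply (hasFDerivAt_const e3 p)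
  -- derivative of the full function v
  set Gn := (h p).comp ((-(c • A)).prod (((-s) • A).prod 0)) + B.flip np with hGn
  have hprod : HasFDerivAt (fun q => w q * h q ((-Real.sin (φ q), Real.cos (φ q), 0) : ℝ × ℝ × ℝ))
      (w p • Gn + (h p np) • W) p := by
    have := hWp.fun_mul hg
    simpa [hGn, hnp, ← hs, ← hc] using this
  have hv : HasFDerivAt
      (fun q => -(w q * h q ((-Real.sin (φ q), Real.cos (φ q), 0) : ℝ × ℝ × ℝ)) - h q e3)
      (-(w p • Gn + (h p np) • W) - ((h p).comp (0 : (ℝ × ℝ × ℝ) →L[ℝ] ℝ × ℝ × ℝ) + B.flip e3)) p :=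
    (hprod.neg).sub hpt
  -- identify the target function with the one above
  have hfun : (fun q => -(w q * Dn φ ρ q) - pt ρ q) =
      (fun q => -(w q * h q ((-Real.sin (φ q), Real.cos (φ q), 0) : ℝ × ℝ × ℝ)) - h q e3) := by
    funext q
    rw [Dn_eq]
    rfl
  -- now compute
  rw [Ds_eq, hfun, hv.fderiv]
  -- evaluate the derivative at sp
  have hρsp : h p sp = 1 := by
    have := hρs p
    rw [Ds_eq] at this
    exact this
  have hAsp : A sp = Ds φ φ p := (Ds_eq φ φ p).symm
  have hAnp : A np = Dn φ φ p := (Dn_eq φ φ p).symm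
  have hAe3 : A e3 = pt φ p := rfl
  have hWsp : W sp = pt φ p + Dn φ φ p * w p := by
    rw [← hws p, Ds_eq]
  have hBspnp : B sp np = -(A np * h p np) := by
    rw [hsymm sp np, key np]
  have hBe3sp : B e3 sp = -(A e3 * h p np) := key e3
  have hNsp : ((-(c • A)).prod (((-s) • A).prod 0)) sp = -(A sp) • sp := by
    refine Prod.ext ?_ (Prod.ext ?_ ?_) <;>
      simp [hsp, ContinuousLinearMap.prod_apply, smul_eq_mul] <;> ring
  simp only [ContinuousLinearMap.sub_apply, ContinuousLinearMap.neg_apply,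
    ContinuousLinearMap.add_apply, ContinuousLinearMap.smul_apply,
    ContinuousLinearMap.comp_apply, ContinuousLinearMap.flip_apply,
    ContinuousLinearMap.zero_apply, smul_eq_mul, hGn]
  rw [show ((Real.cos (φ p), Real.sin (φ p), 0) : ℝ × ℝ × ℝ) = sp from rfl]
  rw [hNsp, map_smul, smul_eq_mul, hρsp, hBspnp, hsymm sp e3, hBe3sp, hWsp, map_zero,
    hAsp, hAnp, hAe3]
  ring

end
end

section
/- Let φ, α : ℝ³ → ℝ be smooth with θ = D_n φ. Suppose D_s α = 0 everywhere and D_n α is nowhere vanishing, and define w = −(∂_τ α)/(D_n α). Then D_s w = ∂_τ φ + θ·w everywhere. -/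
noncomputable section

lemma key_algebra (c s a1 a2 a3 A1 A2 A3 B1 B2 B3 C1 C2 f1 f2 f3 N : ℝ)
    (hN : N = -s * a1 + c * a2) (hN0 : N ≠ 0)
    (hAs : c * a1 + s * a2 = 0)
    (E1 : c * A1 + a1 * (-s * f1) + (s * B1 + a2 * (c * f1)) = 0)
    (E2 : c * A2 + a1 * (-s * f2) + (s * B2 + a2 * (c * f2)) = 0)
    (E3 : c * A3 + a1 * (-s * f3) + (s * B3 + a2 * (c * f3)) = 0)
    (hs1 : A2 = B1) (hs2 : A3 = C1) (hs3 : B3 = C2) :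
    c * (-(a3 * (-(N^2)⁻¹ * (-s * A1 - a1 * (c * f1) + (c * B1 - a2 * (s * f1)))) + N⁻¹ * C1))
    + s * (-(a3 * (-(N^2)⁻¹ * (-s * A2 - a1 * (c * f2) + (c * B2 - a2 * (s * f2)))) + N⁻¹ * C2))
    = f3 + (-s * f1 + c * f2) * (-(a3 / N)) := by
  have fact1 : c * C1 + s * C2 = -f3 * N := by
    rw [hN]; linear_combination E3 - c * hs2 - s * hs3
  have fact2 : c * (-s * A1 - a1 * (c * f1) + (c * B1 - a2 * (s * f1)))
      + s * (-s * A2 - a1 * (c * f2) + (c * B2 - a2 * (s * f2)))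
      = -(-s * f1 + c * f2) * N := by
    rw [hN]
    linear_combination (-s) * E1 + c * E2 - (f1 * c + f2 * s) * hAs
      - (c * c + s * s) * hs1
  have expand : c * (-(a3 * (-(N^2)⁻¹ * (-s * A1 - a1 * (c * f1) + (c * B1 - a2 * (s * f1)))) + N⁻¹ * C1))
    + s * (-(a3 * (-(N^2)⁻¹ * (-s * A2 - a1 * (c * f2) + (c * B2 - a2 * (s * f2)))) + N⁻¹ * C2))
    = a3 * (N^2)⁻¹ * (c * (-s * A1 - a1 * (c * f1) + (c * B1 - a2 * (s * f1)))
      + s * (-s * A2 - a1 * (c * f2) + (c * B2 - a2 * (s * f2)))) - N⁻¹ * (c * C1 + s * C2) := by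
    ring
  rw [expand, fact1, fact2]
  field_simp
  ring

set_option maxHeartbeats 1000000 in
theorem first_equation_automatic (φ α : ℝ × ℝ × ℝ → ℝ)
    (hφ : ContDiff ℝ (⊤ : ℕ∞) φ) (hα : ContDiff ℝ (⊤ : ℕ∞) α)
    (hαs : ∀ p, Ds φ α p = 0)
    (hαn : ∀ p, Dn φ α p ≠ 0) :
    ∀ p, Ds φ (fun p => -(pt α p / Dn φ α p)) p
      = pt φ p + Dn φ φ p * (-(pt α p / Dn φ α p)) := by
  have hα1 : Differentiable ℝ α := hα.differentiable (by simp)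
  have hφ1 : Differentiable ℝ φ := hφ.differentiable (by simp)
  have hF : ContDiff ℝ (⊤ : ℕ∞) (fderiv ℝ α) := hα.fderiv_right (by simp)
  have hDv : ∀ v : ℝ × ℝ × ℝ, ContDiff ℝ (⊤ : ℕ∞) (fun q => fderiv ℝ α q v) :=
    fun v => hF.clm_apply contDiff_const
  intro p
  set c := Real.cos (φ p) with hc
  set s := Real.sin (φ p) with hs
  set φ' := fderiv ℝ φ p with hφ'
  set A' := fderiv ℝ (fun q => fderiv ℝ α q (1,0,0)) p with hA'
  set B' := fderiv ℝ (fun q => fderiv ℝ α q (0,1,0)) p with hB'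
  set C' := fderiv ℝ (fun q => fderiv ℝ α q (0,0,1)) p with hC'
  have hAd : HasFDerivAt (fun q => fderiv ℝ α q (1,0,0)) A' p :=
    (((hDv (1,0,0)).differentiable (by simp)) p).hasFDerivAt
  have hBd : HasFDerivAt (fun q => fderiv ℝ α q (0,1,0)) B' p :=
    (((hDv (0,1,0)).differentiable (by simp)) p).hasFDerivAt
  have hCd : HasFDerivAt (fun q => fderiv ℝ α q (0,0,1)) C' p :=
    (((hDv (0,0,1)).differentiable (by simp)) p).hasFDerivAt
  have hcos : HasFDerivAt (fun q => Real.cos (φ q)) (-s • φ') p :=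
    ((hφ1 p).hasFDerivAt).cos
  have hsin : HasFDerivAt (fun q => Real.sin (φ q)) (c • φ') p :=
    ((hφ1 p).hasFDerivAt).sin
  -- second derivative symmetry
  have hsymm : ∀ v w : ℝ × ℝ × ℝ,
      fderiv ℝ (fderiv ℝ α) p v w = fderiv ℝ (fderiv ℝ α) p w v :=
    second_derivative_symmetric (fun y => (hα1 y).hasFDerivAt)
      ((hF.differentiable (by simp) p).hasFDerivAt)
  have happ : ∀ v w : ℝ × ℝ × ℝ,
      fderiv ℝ (fun q => fderiv ℝ α q v) p w = fderiv ℝ (fderiv ℝ α) p w v := by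
    intro v w
    rw [fderiv_clm_apply (hF.differentiable (by simp) p) (differentiableAt_const v)]
    simp
  have hsym1 : A' (0,1,0) = B' (1,0,0) := by
    rw [hA', hB', happ, happ, hsymm]
  have hsym2 : A' (0,0,1) = C' (1,0,0) := by
    rw [hA', hC', happ, happ, hsymm]
  have hsym3 : B' (0,0,1) = C' (0,1,0) := by
    rw [hB', hC', happ, happ, hsymm]
  -- derivative of Ds φ α ≡ 0
  have hg : HasFDerivAt (fun q => Real.cos (φ q) * fderiv ℝ α q (1,0,0)
      + Real.sin (φ q) * fderiv ℝ α q (0,1,0))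
      ((c • A' + fderiv ℝ α p (1,0,0) • (-s • φ'))
        + (s • B' + fderiv ℝ α p (0,1,0) • (c • φ'))) p :=
    (hcos.mul hAd).add (hsin.mul hBd)
  have hg0 : (fun q => Real.cos (φ q) * fderiv ℝ α q (1,0,0)
      + Real.sin (φ q) * fderiv ℝ α q (0,1,0)) = fun _ => (0:ℝ) := by
    funext q
    simpa [Ds, px, py] using hαs q
  have hgzero : ((c • A' + fderiv ℝ α p (1,0,0) • (-s • φ'))
        + (s • B' + fderiv ℝ α p (0,1,0) • (c • φ'))) = 0 := by
    refine hg.unique ?_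
    rw [hg0]; exact hasFDerivAt_const 0 p
  have Eqv : ∀ v : ℝ × ℝ × ℝ, c * A' v + fderiv ℝ α p (1,0,0) * (-s * φ' v)
      + (s * B' v + fderiv ℝ α p (0,1,0) * (c * φ' v)) = 0 := by
    intro v
    have h := congrArg (fun (L : (ℝ×ℝ×ℝ) →L[ℝ] ℝ) => L v) hgzero
    simp only [ContinuousLinearMap.add_apply, ContinuousLinearMap.coe_smul',
      Pi.smul_apply, smul_eq_mul, ContinuousLinearMap.zero_apply,
      ContinuousLinearMap.neg_apply, neg_mul, mul_neg, neg_smul, Pi.neg_apply] at h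
    linarith [h]
  -- N and its derivative
  have hN0 : (-s * fderiv ℝ α p (1,0,0) + c * fderiv ℝ α p (0,1,0)) ≠ 0 := by
    have := hαn p
    simpa [Dn, px, py] using this
  have hN : HasFDerivAt (fun q => -Real.sin (φ q) * fderiv ℝ α q (1,0,0)
      + Real.cos (φ q) * fderiv ℝ α q (0,1,0))
      (((-s) • A' + fderiv ℝ α p (1,0,0) • (-(c • φ')))
        + (c • B' + fderiv ℝ α p (0,1,0) • (-s • φ'))) p :=
    (hsin.neg.mul hAd).add (hcos.mul hBd)
  -- derivative of w
  have hinv : HasFDerivAt (fun q => (-Real.sin (φ q) * fderiv ℝ α q (1,0,0)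
      + Real.cos (φ q) * fderiv ℝ α q (0,1,0))⁻¹)
      ((-((-s * fderiv ℝ α p (1,0,0) + c * fderiv ℝ α p (0,1,0)) ^ 2)⁻¹) •
        (((-s) • A' + fderiv ℝ α p (1,0,0) • (-(c • φ')))
        + (c • B' + fderiv ℝ α p (0,1,0) • (-s • φ')))) p :=
    (hasDerivAt_inv hN0).comp_hasFDerivAt p hN
  have hw : HasFDerivAt (fun q => -(fderiv ℝ α q (0,0,1) * (-Real.sin (φ q) * fderiv ℝ α q (1,0,0)
      + Real.cos (φ q) * fderiv ℝ α q (0,1,0))⁻¹))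
      (-(fderiv ℝ α p (0,0,1) • ((-((-s * fderiv ℝ α p (1,0,0) + c * fderiv ℝ α p (0,1,0)) ^ 2)⁻¹) •
        (((-s) • A' + fderiv ℝ α p (1,0,0) • (-(c • φ')))
        + (c • B' + fderiv ℝ α p (0,1,0) • (-s • φ'))))
        + (-s * fderiv ℝ α p (1,0,0) + c * fderiv ℝ α p (0,1,0))⁻¹ • C')) p :=
    (hCd.mul hinv).neg
  have hweq : (fun q => -(fderiv ℝ α q (0,0,1) * (-Real.sin (φ q) * fderiv ℝ α q (1,0,0)
      + Real.cos (φ q) * fderiv ℝ α q (0,1,0))⁻¹))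
      = (fun q => -(fderiv ℝ α q (0,0,1) / (-Real.sin (φ q) * fderiv ℝ α q (1,0,0)
      + Real.cos (φ q) * fderiv ℝ α q (0,1,0)))) := by
    funext q; rw [div_eq_mul_inv]
  rw [hweq] at hw
  have hfw := hw.fderiv
  -- unfold the goal
  simp only [Ds, Dn, px, py, pt]
  rw [hfw]
  simp only [ContinuousLinearMap.add_apply, ContinuousLinearMap.coe_smul',
    Pi.smul_apply, smul_eq_mul, ContinuousLinearMap.neg_apply, neg_smul,
    Pi.neg_apply, ContinuousLinearMap.coe_neg']
  linear_combination key_algebra c s (fderiv ℝ α p (1,0,0)) (fderiv ℝ α p (0,1,0))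
    (fderiv ℝ α p (0,0,1)) (A' (1,0,0)) (A' (0,1,0)) (A' (0,0,1))
    (B' (1,0,0)) (B' (0,1,0)) (B' (0,0,1)) (C' (1,0,0)) (C' (0,1,0))
    (φ' (1,0,0)) (φ' (0,1,0)) (φ' (0,0,1))
    (-s * fderiv ℝ α p (1,0,0) + c * fderiv ℝ α p (0,1,0)) rfl hN0
    (by simpa [Ds, px, py] using hαs p)
    (Eqv (1,0,0)) (Eqv (0,1,0)) (Eqv (0,0,1)) hsym1 hsym2 hsym3

end
end

section
/- Let φ, ρ, α : ℝ³ → ℝ be smooth with θ = D_n φ, and let M : ℝ² → ℝ be smooth. Suppose D_s ρ = 1 and D_s α = 0 everywhere, D_n α(p) = M(ρ(p), α(p)) for all p, and M(ρ(p), α(p)) ≠ 0 for all p. Then the fibre divergence satisfies θ(p) = −(∂₁M)(ρ(p), α(p)) / M(ρ(p), α(p)) at every point p, where ∂₁M denotes the partial derivative of M with respect to its first argument. -/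
noncomputable section

lemma eval_lin (L : ℝ × ℝ × ℝ →L[ℝ] ℝ) (a b : ℝ) :
    L (a, b, 0) = a * L (1, 0, 0) + b * L (0, 1, 0) := by
  have h : ((a, b, 0) : ℝ × ℝ × ℝ) = a • ((1:ℝ), (0:ℝ), (0:ℝ)) + b • ((0:ℝ), (1:ℝ), (0:ℝ)) := by
    simp [Prod.ext_iff]
  rw [h, map_add, map_smul, map_smul, smul_eq_mul, smul_eq_mul]

theorem theta_formula (φ ρ α : ℝ × ℝ × ℝ → ℝ) (M : ℝ × ℝ → ℝ)
    (hφ : ContDiff ℝ (⊤ : ℕ∞) φ) (hρ : ContDiff ℝ (⊤ : ℕ∞) ρ) (hα : ContDiff ℝ (⊤ : ℕ∞) α)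
    (hM : ContDiff ℝ (⊤ : ℕ∞) M)
    (hρs : ∀ p, Ds φ ρ p = 1)
    (hαs : ∀ p, Ds φ α p = 0)
    (hαn : ∀ p, Dn φ α p = M (ρ p, α p))
    (hMne : ∀ p, M (ρ p, α p) ≠ 0) :
    ∀ p, Dn φ φ p = -(fderiv ℝ M (ρ p, α p) (1, 0)) / M (ρ p, α p) := by
  intro p
  set c : ℝ := Real.cos (φ p) with hc
  set s : ℝ := Real.sin (φ p) with hs
  -- differentiability
  have hφd : Differentiable ℝ φ := hφ.differentiable (by simp)
  have hρd : Differentiable ℝ ρ := hρ.differentiable (by simp)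
  have hαd : Differentiable ℝ α := hα.differentiable (by simp)
  have hMd : Differentiable ℝ M := hM.differentiable (by simp)
  set A : (ℝ × ℝ × ℝ) → (ℝ × ℝ × ℝ →L[ℝ] ℝ) := fderiv ℝ α with hA
  have hAc : ContDiff ℝ (⊤ : ℕ∞) A := hα.fderiv_right (by simp)
  set F : (ℝ × ℝ × ℝ) →L[ℝ] (ℝ × ℝ × ℝ →L[ℝ] ℝ) := fderiv ℝ A p with hFdef
  have hF : HasFDerivAt A F p := ((hAc.differentiable (by simp)) p).hasFDerivAt
  have hsymm : ∀ v w, F v w = F w v :=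
    second_derivative_symmetric (fun y => (hαd y).hasFDerivAt) hF
  set dφ : ℝ × ℝ × ℝ →L[ℝ] ℝ := fderiv ℝ φ p with hdφ
  have hφp : HasFDerivAt φ dφ p := (hφd p).hasFDerivAt
  have hcos : HasFDerivAt (fun q => Real.cos (φ q)) (-(s • dφ)) p := by
    simpa [hs, Function.comp_def] using (Real.hasDerivAt_cos (φ p)).comp_hasFDerivAt p hφp
  have hsin : HasFDerivAt (fun q => Real.sin (φ q)) (c • dφ) p := by
    simpa [hc, Function.comp_def] using (Real.hasDerivAt_sin (φ p)).comp_hasFDerivAt p hφp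
  have hnsin : HasFDerivAt (fun q => -Real.sin (φ q)) (-(c • dφ)) p := hsin.neg
  have hAe1 : HasFDerivAt (fun q => A q (1, 0, 0))
      ((A p).comp (0 : ℝ × ℝ × ℝ →L[ℝ] ℝ × ℝ × ℝ) + F.flip (1, 0, 0)) p := hF.clm_apply (hasFDerivAt_const _ _)
  have hAe2 : HasFDerivAt (fun q => A q (0, 1, 0))
      ((A p).comp (0 : ℝ × ℝ × ℝ →L[ℝ] ℝ × ℝ × ℝ) + F.flip (0, 1, 0)) p := hF.clm_apply (hasFDerivAt_const _ _)
  -- derivative of Ds φ α (which is identically 0)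
  have h1 := (hcos.mul hAe1).add (hsin.mul hAe2)
  have h1z : HasFDerivAt (fun q => Ds φ α q) (0 : ℝ × ℝ × ℝ →L[ℝ] ℝ) p := by
    simp only [hαs]; exact hasFDerivAt_const 0 p
  have e1 := h1.unique h1z
  -- derivative of Dn φ α (which equals M ∘ (ρ, α))
  have h2 := (hnsin.mul hAe1).add (hcos.mul hAe2)
  set dρ : ℝ × ℝ × ℝ →L[ℝ] ℝ := fderiv ℝ ρ p with hdρ
  set dM : ℝ × ℝ →L[ℝ] ℝ := fderiv ℝ M (ρ p, α p) with hdM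
  have h2z : HasFDerivAt (fun q => Dn φ α q) (dM.comp (dρ.prod (A p))) p := by
    have : HasFDerivAt (fun q => M (ρ q, α q)) (dM.comp (dρ.prod (A p))) p :=
      (hMd (ρ p, α p)).hasFDerivAt.comp p ((hρd p).hasFDerivAt.prodMk (hαd p).hasFDerivAt)
    exact this.congr_of_eventuallyEq (Filter.Eventually.of_forall fun q => hαn q)
  have e2 := h2.unique h2z
  -- evaluate e1 at n = (-s, c, 0), e2 at st = (c, s, 0)
  have E1 := congrArg (fun L : ℝ × ℝ × ℝ →L[ℝ] ℝ => L (-s, c, 0)) e1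
  have E2 := congrArg (fun L : ℝ × ℝ × ℝ →L[ℝ] ℝ => L (c, s, 0)) e2
  simp only [ContinuousLinearMap.add_apply, ContinuousLinearMap.smul_apply,
    ContinuousLinearMap.comp_apply, ContinuousLinearMap.zero_apply, map_zero,
    ContinuousLinearMap.flip_apply, ContinuousLinearMap.zero_apply,
    ContinuousLinearMap.neg_apply, ContinuousLinearMap.prod_apply,
    smul_eq_mul, mul_zero, zero_add, add_zero] at E1 E2
  -- scalar abbreviations
  have hdφn : dφ (-s, c, 0) = Dn φ φ p := by
    rw [eval_lin]; simp [Dn, px, py, hdφ, hs, hc]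
  have hdφs : dφ (c, s, 0) = Ds φ φ p := by
    rw [eval_lin]; simp [Ds, px, py, hdφ, hs, hc]
  have hαsp : c * A p (1, 0, 0) + s * A p (0, 1, 0) = 0 := hαs p
  have hαnp : -s * A p (1, 0, 0) + c * A p (0, 1, 0) = M (ρ p, α p) := hαn p
  have hdρs : dρ (c, s, 0) = 1 := by
    rw [eval_lin]
    have := hρs p
    simpa [Ds, px, py, hdρ] using this
  have hdαs : A p (c, s, 0) = 0 := by
    rw [eval_lin]
    have := hαs p
    simpa [Ds, px, py, hA] using this
  -- rewrite dM argument in E2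
  rw [hdρs, hdαs] at E2
  -- symmetry of second derivative
  have hsy : F (c, s, 0) (-s, c, 0) = F (-s, c, 0) (c, s, 0) := hsymm _ _
  rw [eval_lin (F (c, s, 0)) (-s) c, eval_lin (F (-s, c, 0)) c s] at hsy
  -- final algebra
  rw [hdφn] at E1
  rw [hdφs] at E2
  have hMv := hMne p
  show Dn φ φ p = -(dM (1, 0)) / M (ρ p, α p)
  rw [eq_div_iff hMv]
  linear_combination E1 - E2 + hsy - Ds φ φ p * hαsp - Dn φ φ p * hαnp

end
end

section
/- Let ρ, σ : ℝ² → ℝ be smooth functions of coordinates (s, n) satisfying ∂_s ρ = sinh σ and ∂_n σ = sin ρ everywhere. Then the complex-valued function Ω = ρ + i·σ : ℝ² → ℂ satisfies the sine-Gordon equation ∂_n(∂_s Ω) = sin Ω everywhere, where sin denotes the complex sine function. -/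
noncomputable section

def ps (f : ℝ × ℝ → ℝ) (p : ℝ × ℝ) : ℝ := fderiv ℝ f p (1, 0)
def pn (f : ℝ × ℝ → ℝ) (p : ℝ × ℝ) : ℝ := fderiv ℝ f p (0, 1)

/-- Partial derivative with respect to `s` of a complex-valued function. -/
def psC (f : ℝ × ℝ → ℂ) (p : ℝ × ℝ) : ℂ := fderiv ℝ f p (1, 0)
/-- Partial derivative with respect to `n` of a complex-valued function. -/
def pnC (f : ℝ × ℝ → ℂ) (p : ℝ × ℝ) : ℂ := fderiv ℝ f p (0, 1)

lemma combo_fderiv {f g : ℝ × ℝ → ℝ} {Df Dg : ℝ × ℝ →L[ℝ] ℝ} {p : ℝ × ℝ}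
    (hf : HasFDerivAt f Df p) (hg : HasFDerivAt g Dg p) (v : ℝ × ℝ) :
    fderiv ℝ (fun q => (f q : ℂ) + Complex.I * (g q : ℂ)) p v
      = (Df v : ℂ) + Complex.I * (Dg v : ℂ) := by
  have hF : HasFDerivAt (fun q => (f q : ℂ) + Complex.I * (g q : ℂ))
      (Complex.ofRealCLM.comp Df + (Complex.I • Complex.ofRealCLM).comp Dg) p := by
    have h1 : HasFDerivAt (fun q => (f q : ℂ)) (Complex.ofRealCLM.comp Df) p :=
      Complex.ofRealCLM.hasFDerivAt.comp p hf
    have h2 : HasFDerivAt (fun q => Complex.I * (g q : ℂ))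
        ((Complex.I • Complex.ofRealCLM).comp Dg) p := by
      have := (Complex.I • Complex.ofRealCLM).hasFDerivAt.comp p hg
      simpa [Function.comp_def, smul_eq_mul] using this
    exact h1.add h2
  rw [hF.fderiv]
  simp [smul_eq_mul]

theorem sine_gordon (ρ σ : ℝ × ℝ → ℝ)
    (hρ : ContDiff ℝ (⊤ : ℕ∞) ρ) (hσ : ContDiff ℝ (⊤ : ℕ∞) σ)
    (h1 : ∀ p, ps ρ p = Real.sinh (σ p))
    (h2 : ∀ p, pn σ p = Real.sin (ρ p)) :
    ∀ p, pnC (psC (fun p => (ρ p : ℂ) + Complex.I * (σ p : ℂ))) p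
      = Complex.sin ((ρ p : ℂ) + Complex.I * (σ p : ℂ)) := by
  intro p
  have hρd : Differentiable ℝ ρ := hρ.differentiable (by simp)
  have hσd : Differentiable ℝ σ := hσ.differentiable (by simp)
  -- first level: psC Ω = ps ρ + I * ps σ
  have hpsC : psC (fun p => (ρ p : ℂ) + Complex.I * (σ p : ℂ))
      = fun q => (ps ρ q : ℂ) + Complex.I * (ps σ q : ℂ) := by
    funext q
    exact combo_fderiv (hρd q).hasFDerivAt (hσd q).hasFDerivAt (1, 0)
  -- derivative of ps ρ = sinh ∘ σ
  have hpsρ_eq : ps ρ = fun q => Real.sinh (σ q) := funext h1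
  have hpsρ' : HasFDerivAt (ps ρ) (Real.cosh (σ p) • fderiv ℝ σ p) p := by
    rw [hpsρ_eq]
    exact (Real.hasDerivAt_sinh (σ p)).comp_hasFDerivAt p (hσd p).hasFDerivAt
  -- derivative of ps σ via second derivative
  have hσ1 : ContDiff ℝ (⊤ : ℕ∞) (fderiv ℝ σ) := hσ.fderiv_right (by simp)
  have hσ1d : Differentiable ℝ (fderiv ℝ σ) := hσ1.differentiable (by simp)
  set f'' := fderiv ℝ (fderiv ℝ σ) p with hf''
  have hpsσ' : HasFDerivAt (ps σ)
      ((ContinuousLinearMap.apply ℝ ℝ ((1:ℝ), (0:ℝ))).comp f'') p := by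
    have := (ContinuousLinearMap.apply ℝ ℝ ((1:ℝ), (0:ℝ))).hasFDerivAt.comp p
      (hσ1d p).hasFDerivAt
    simp only [Function.comp_def, ContinuousLinearMap.apply_apply] at this
    exact this
  have hpnσ' : HasFDerivAt (pn σ)
      ((ContinuousLinearMap.apply ℝ ℝ ((0:ℝ), (1:ℝ))).comp f'') p := by
    have := (ContinuousLinearMap.apply ℝ ℝ ((0:ℝ), (1:ℝ))).hasFDerivAt.comp p
      (hσ1d p).hasFDerivAt
    simp only [Function.comp_def, ContinuousLinearMap.apply_apply] at this
    exact this
  -- symmetry of second derivative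
  have hsymm : ∀ v w, f'' v w = f'' w v :=
    second_derivative_symmetric (fun y => (hσd y).hasFDerivAt) (hσ1d p).hasFDerivAt
  -- pn σ = sin ∘ ρ, so its fderiv is cos (ρ p) • Dρ
  have hpnσ_eq : pn σ = fun q => Real.sin (ρ q) := funext h2
  have hpnσ'2 : HasFDerivAt (pn σ) (Real.cos (ρ p) • fderiv ℝ ρ p) p := by
    rw [hpnσ_eq]
    exact (Real.hasDerivAt_sin (ρ p)).comp_hasFDerivAt p (hρd p).hasFDerivAt
  have huniq := hpnσ'.unique hpnσ'2
  -- compute pn (ps σ) p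
  have key : f'' (0, 1) (1, 0) = Real.cos (ρ p) * Real.sinh (σ p) := by
    have : f'' (1, 0) (0, 1) = Real.cos (ρ p) * (fderiv ℝ ρ p (1, 0)) := by
      have := congrArg (fun L => L ((1:ℝ), (0:ℝ))) huniq
      simpa [ContinuousLinearMap.smul_apply, smul_eq_mul] using this
    rw [hsymm, this, ← ps, h1]
  -- now compute
  rw [hpsC]
  have := combo_fderiv hpsρ' hpsσ' ((0:ℝ), (1:ℝ))
  rw [pnC, this]
  have e1 : (Real.cosh (σ p) • fderiv ℝ σ p) ((0:ℝ), (1:ℝ))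
      = Real.cosh (σ p) * Real.sin (ρ p) := by
    have hv : fderiv ℝ σ p ((0:ℝ), (1:ℝ)) = Real.sin (ρ p) := h2 p
    simp [smul_eq_mul, hv]
  have e2 : ((ContinuousLinearMap.apply ℝ ℝ ((1:ℝ), (0:ℝ))).comp f'') ((0:ℝ), (1:ℝ))
      = Real.cos (ρ p) * Real.sinh (σ p) := by
    simpa using key
  rw [e1, e2]
  rw [show Complex.I * ((σ p : ℝ) : ℂ) = ((σ p : ℝ) : ℂ) * Complex.I from mul_comm _ _,
    Complex.sin_add, Complex.sin_mul_I, Complex.cos_mul_I]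
  push_cast [← Complex.ofReal_sin, ← Complex.ofReal_cos, ← Complex.ofReal_sinh,
    ← Complex.ofReal_cosh]
  ring



end
end

section
/- Let ρ, σ : ℝ² → ℝ be smooth functions of coordinates (s, n) satisfying ∂_s ρ = sinh σ and ∂_n σ = sin ρ everywhere, and suppose sin(ρ(s,n)) ≠ 0 for all (s,n). Then ρ satisfies the third-order equation ∂_n((∂_n∂_s ρ)/sin ρ) − (sin ρ)·(∂_s ρ) = 0 everywhere; that is, the pair (ρ, N) with N(ρ) = sin ρ solves the equation ∂_n((∂_n∂_s ρ)/N(ρ)) + N''(ρ)·(∂_s ρ) = 0. -/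
noncomputable section

lemma pn_sinh_comp (σ : ℝ × ℝ → ℝ) (hσ : ContDiff ℝ (⊤ : ℕ∞) σ) (p : ℝ × ℝ) :
    pn (fun q => Real.sinh (σ q)) p = Real.cosh (σ p) * pn σ p := by
  have hσd : DifferentiableAt ℝ σ p := (hσ.differentiable (by simp)) p
  have h := (Real.hasDerivAt_sinh (σ p)).comp_hasFDerivAt p hσd.hasFDerivAt
  have : fderiv ℝ (fun q => Real.sinh (σ q)) p = Real.cosh (σ p) • fderiv ℝ σ p := h.fderiv
  simp [pn, this]

lemma pn_cosh_comp (σ : ℝ × ℝ → ℝ) (hσ : ContDiff ℝ (⊤ : ℕ∞) σ) (p : ℝ × ℝ) :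
    pn (fun q => Real.cosh (σ q)) p = Real.sinh (σ p) * pn σ p := by
  have hσd : DifferentiableAt ℝ σ p := (hσ.differentiable (by simp)) p
  have h := (Real.hasDerivAt_cosh (σ p)).comp_hasFDerivAt p hσd.hasFDerivAt
  have : fderiv ℝ (fun q => Real.cosh (σ q)) p = Real.sinh (σ p) • fderiv ℝ σ p := h.fderiv
  simp [pn, this]

theorem backlund_solves_third_order (ρ σ : ℝ × ℝ → ℝ)
    (hρ : ContDiff ℝ (⊤ : ℕ∞) ρ) (hσ : ContDiff ℝ (⊤ : ℕ∞) σ)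
    (h1 : ∀ p, ps ρ p = Real.sinh (σ p))
    (h2 : ∀ p, pn σ p = Real.sin (ρ p))
    (hne : ∀ p, Real.sin (ρ p) ≠ 0) :
    ∀ p, pn (fun p => pn (ps ρ) p / Real.sin (ρ p)) p
      - Real.sin (ρ p) * ps ρ p = 0 := by
  intro p
  have hfun : (fun p => pn (ps ρ) p / Real.sin (ρ p)) = fun q => Real.cosh (σ q) := by
    funext q
    have hps : ps ρ = fun q => Real.sinh (σ q) := funext h1
    rw [hps, pn_sinh_comp σ hσ q, h2 q]
    rw [mul_div_assoc, div_self (hne q), mul_one]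
  rw [hfun, pn_cosh_comp σ hσ p, h2 p, h1 p]
  ring

end
end

section
/- Let λ ≠ 0 be a real number and let ρ, σ : ℝ² → ℝ be smooth functions of coordinates (s, n) satisfying ∂_s ρ = λ·sin σ and ∂_n σ = λ⁻¹·e^ρ everywhere. Then the quantity ∂_s σ + λ·cos σ is independent of n, i.e. ∂_n(∂_s σ + λ·cos σ) = 0 everywhere; hence ∂_s σ + λ·cos σ = u(s) for a function u of s alone. -/
noncomputable section

theorem mkdv_potential (lam : ℝ) (hlam : lam ≠ 0) (ρ σ : ℝ × ℝ → ℝ)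
    (hρ : ContDiff ℝ (⊤ : ℕ∞) ρ) (hσ : ContDiff ℝ (⊤ : ℕ∞) σ)
    (h1 : ∀ p, ps ρ p = lam * Real.sin (σ p))
    (h2 : ∀ p, pn σ p = lam⁻¹ * Real.exp (ρ p)) :
    (∀ p, pn (fun p => ps σ p + lam * Real.cos (σ p)) p = 0)
    ∧ ∃ u : ℝ → ℝ, ∀ p : ℝ × ℝ, ps σ p + lam * Real.cos (σ p) = u p.1 := by
  have hσd : Differentiable ℝ σ := hσ.differentiable (by simp)
  have hG : ContDiff ℝ (⊤ : ℕ∞) (fderiv ℝ σ) := hσ.fderiv_right (by simp)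
  have hGd : Differentiable ℝ (fderiv ℝ σ) := hG.differentiable (by simp)
  -- key: a derivative D of F at each p with D (0,1) = 0
  have key : ∀ p, ∃ D : (ℝ × ℝ) →L[ℝ] ℝ,
      HasFDerivAt (fun q => ps σ q + lam * Real.cos (σ q)) D p ∧ D (0, 1) = 0 := by
    intro p
    have hGp : HasFDerivAt (fderiv ℝ σ) (fderiv ℝ (fderiv ℝ σ) p) p :=
      (hGd p).hasFDerivAt
    have hA : HasFDerivAt (fun q => ps σ q)
        ((ContinuousLinearMap.apply ℝ ℝ ((1 : ℝ), (0 : ℝ))).comp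
          (fderiv ℝ (fderiv ℝ σ) p)) p :=
      (ContinuousLinearMap.apply ℝ ℝ ((1 : ℝ), (0 : ℝ))).hasFDerivAt.comp p hGp
    have hB : HasFDerivAt (fun q => lam * Real.cos (σ q))
        (lam • ((-Real.sin (σ p)) • fderiv ℝ σ p)) p :=
      ((hσd p).hasFDerivAt.cos).const_mul lam
    refine ⟨_, hA.add hB, ?_⟩
    -- symmetry of the second derivative
    have hsymm : fderiv ℝ (fderiv ℝ σ) p (0, 1) (1, 0)
        = fderiv ℝ (fderiv ℝ σ) p (1, 0) (0, 1) :=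
      (hσ.contDiffAt.isSymmSndFDerivAt (by rw [minSmoothness_of_isRCLikeNormedField]; exact WithTop.coe_le_coe.mpr (le_top : (2 : ℕ∞) ≤ ⊤))) _ _
    -- compute ∂_s (∂_n σ) from h2
    have hpn : (fun q => fderiv ℝ σ q (0, 1)) = fun q => lam⁻¹ * Real.exp (ρ q) := by
      funext q; exact h2 q
    have hC : HasFDerivAt (fun q => fderiv ℝ σ q (0, 1))
        ((ContinuousLinearMap.apply ℝ ℝ ((0 : ℝ), (1 : ℝ))).comp
          (fderiv ℝ (fderiv ℝ σ) p)) p :=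
      (ContinuousLinearMap.apply ℝ ℝ ((0 : ℝ), (1 : ℝ))).hasFDerivAt.comp p hGp
    have hC' : HasFDerivAt (fun q => lam⁻¹ * Real.exp (ρ q))
        (lam⁻¹ • (Real.exp (ρ p) • fderiv ℝ ρ p)) p :=
      ((hρ.differentiable (by simp) p).hasFDerivAt.exp).const_mul lam⁻¹
    have hCeq : ((ContinuousLinearMap.apply ℝ ℝ ((0 : ℝ), (1 : ℝ))).comp
          (fderiv ℝ (fderiv ℝ σ) p))
        = (lam⁻¹ • (Real.exp (ρ p) • fderiv ℝ ρ p)) := by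
      have := hC.fderiv
      rw [hpn] at this
      rw [← this, hC'.fderiv]
    have e1 : fderiv ℝ (fderiv ℝ σ) p (1, 0) (0, 1)
        = lam⁻¹ * (Real.exp (ρ p) * (lam * Real.sin (σ p))) := by
      have := congrArg (fun (L : (ℝ × ℝ) →L[ℝ] ℝ) => L ((1 : ℝ), (0 : ℝ))) hCeq
      simp only [ContinuousLinearMap.comp_apply, ContinuousLinearMap.apply_apply,
        ContinuousLinearMap.smul_apply, smul_eq_mul] at this
      rw [this]
      have : fderiv ℝ ρ p (1, 0) = lam * Real.sin (σ p) := h1 p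
      rw [this]
    have e2 : fderiv ℝ σ p (0, 1) = lam⁻¹ * Real.exp (ρ p) := h2 p
    simp only [ContinuousLinearMap.add_apply, ContinuousLinearMap.comp_apply,
      ContinuousLinearMap.apply_apply, ContinuousLinearMap.smul_apply, smul_eq_mul]
    rw [hsymm, e1, e2]
    field_simp
    ring
  constructor
  · intro p
    obtain ⟨D, hD, hD0⟩ := key p
    show fderiv ℝ (fun q => ps σ q + lam * Real.cos (σ q)) p (0, 1) = 0
    rw [hD.fderiv]; exact hD0
  · refine ⟨fun s => ps σ (s, 0) + lam * Real.cos (σ (s, 0)), ?_⟩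
    intro p
    set F : ℝ × ℝ → ℝ := fun q => ps σ q + lam * Real.cos (σ q) with hF
    have hline : ∀ s : ℝ, ∀ t : ℝ, F (s, t) = F (s, 0) := by
      intro s
      have hg : ∀ t : ℝ, HasDerivAt (fun t => F (s, t)) 0 t := by
        intro t
        obtain ⟨D, hD, hD0⟩ := key (s, t)
        have hin : HasDerivAt (fun t : ℝ => ((s, t) : ℝ × ℝ)) (0, 1) t := by
          have h1' : HasDerivAt (fun _ : ℝ => s) 0 t := hasDerivAt_const t s
          have h2' : HasDerivAt (fun t : ℝ => t) 1 t := hasDerivAt_id t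
          exact h1'.prodMk h2'
        have := hD.comp_hasDerivAt t hin
        rwa [hD0] at this
      intro t
      have hdiff : Differentiable ℝ (fun t => F (s, t)) :=
        fun x => ((hg x).differentiableAt)
      have hz : ∀ x, deriv (fun t => F (s, t)) x = 0 := fun x => (hg x).deriv
      exact is_const_of_deriv_eq_zero hdiff hz t 0
    have := hline p.1 p.2
    simpa using this
end
end

section
/- Let λ be a nonzero complex number and let Ω, Ψ : ℝ² → ℂ be smooth functions of coordinates (s, n) satisfying the Bäcklund relations ∂_s((Ω + Ψ)/2) = −i·λ·sinh((Ω − Ψ)/2) and ∂_n((Ω − Ψ)/2) = i·λ⁻¹·exp((Ω + Ψ)/2) everywhere. Then both Ω and Ψ satisfy the Liouville equation: ∂_n(∂_s Ω) = exp Ω and ∂_n(∂_s Ψ) = exp Ψ everywhere. -/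
noncomputable section

/-- Chain rule in the form we need. -/
lemma chainC (f : ℝ × ℝ → ℂ) (p : ℝ × ℝ) (hf : DifferentiableAt ℝ f p)
    (g : ℂ → ℂ) (g' : ℂ) (hg : HasDerivAt g g' (f p)) (w : ℝ × ℝ) :
    fderiv ℝ (fun q => g (f q)) p w = g' * fderiv ℝ f p w := by
  have h := (hg.hasFDerivAt.restrictScalars ℝ).comp p hf.hasFDerivAt
  rw [show (fun q => g (f q)) = g ∘ f from rfl, h.fderiv]
  simp [mul_comm]

lemma smooth_partial (f : ℝ × ℝ → ℂ) (hf : ContDiff ℝ (⊤ : ℕ∞) f) (w : ℝ × ℝ) :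
    ContDiff ℝ (⊤ : ℕ∞) (fun q => fderiv ℝ f q w) :=
  (hf.fderiv_right (by simp)).clm_apply contDiff_const

lemma fderiv_partial (f : ℝ × ℝ → ℂ) (hf : ContDiff ℝ (⊤ : ℕ∞) f) (p v w : ℝ × ℝ) :
    fderiv ℝ (fun q => fderiv ℝ f q w) p v = fderiv ℝ (fderiv ℝ f) p v w := by
  have hD : DifferentiableAt ℝ (fderiv ℝ f) p :=
    ((hf.fderiv_right (m := (⊤ : ℕ∞)) (by simp)).differentiable (by simp)) p
  have h : (fun q => fderiv ℝ f q w)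
      = (ContinuousLinearMap.apply ℝ ℂ w) ∘ (fderiv ℝ f) := rfl
  rw [h, fderiv_comp p ((ContinuousLinearMap.apply ℝ ℂ w).differentiableAt) hD]
  simp

/-- Symmetry of mixed partials. -/
lemma mixed_symm (f : ℝ × ℝ → ℂ) (hf : ContDiff ℝ (⊤ : ℕ∞) f) (p v w : ℝ × ℝ) :
    fderiv ℝ (fun q => fderiv ℝ f q w) p v = fderiv ℝ (fun q => fderiv ℝ f q v) p w := by
  rw [fderiv_partial f hf, fderiv_partial f hf]
  exact (hf.contDiffAt.isSymmSndFDerivAt (by rw [minSmoothness_of_isRCLikeNormedField]; exact WithTop.coe_le_coe.mpr le_top)) v w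

theorem liouville_backlund (lam : ℂ) (hlam : lam ≠ 0) (Ω Ψ : ℝ × ℝ → ℂ)
    (hΩ : ContDiff ℝ (⊤ : ℕ∞) Ω) (hΨ : ContDiff ℝ (⊤ : ℕ∞) Ψ)
    (h1 : ∀ p, psC (fun p => (Ω p + Ψ p) / 2) p
      = -Complex.I * lam * Complex.sinh ((Ω p - Ψ p) / 2))
    (h2 : ∀ p, pnC (fun p => (Ω p - Ψ p) / 2) p
      = Complex.I * lam⁻¹ * Complex.exp ((Ω p + Ψ p) / 2)) :
    (∀ p, pnC (psC Ω) p = Complex.exp (Ω p))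
    ∧ (∀ p, pnC (psC Ψ) p = Complex.exp (Ψ p)) := by
  set u : ℝ × ℝ → ℂ := fun p => (Ω p + Ψ p) / 2 with hu_def
  set v : ℝ × ℝ → ℂ := fun p => (Ω p - Ψ p) / 2 with hv_def
  have hu : ContDiff ℝ (⊤ : ℕ∞) u := (hΩ.add hΨ).div_const 2
  have hv : ContDiff ℝ (⊤ : ℕ∞) v := (hΩ.sub hΨ).div_const 2
  -- first mixed partial of u
  have keyU : ∀ p, pnC (psC u) p = Complex.cosh (v p) * Complex.exp (u p) := by
    intro p
    have hfun : psC u = fun q => -Complex.I * lam * Complex.sinh (v q) := funext h1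
    have hg : HasDerivAt (fun z => -Complex.I * lam * Complex.sinh z)
        (-Complex.I * lam * Complex.cosh (v p)) (v p) :=
      (Complex.hasDerivAt_sinh (v p)).const_mul _
    have := chainC v p (hv.differentiable (by simp) p) _ _ hg (0, 1)
    rw [pnC, hfun, this]
    have h2p := h2 p
    rw [pnC] at h2p
    rw [show fderiv ℝ v p (0,1) = Complex.I * lam⁻¹ * Complex.exp (u p) from h2p]
    field_simp [Complex.I_ne_zero]
    ring_nf
    rw [Complex.I_sq]
    ring
  -- second mixed partial of v
  have keyV : ∀ p, pnC (psC v) p = Complex.sinh (v p) * Complex.exp (u p) := by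
    intro p
    have hswap : pnC (psC v) p = psC (pnC v) p := by
      simp only [pnC, psC]
      exact mixed_symm v hv p (0,1) (1,0)
    have hfun : pnC v = fun q => Complex.I * lam⁻¹ * Complex.exp (u q) := funext h2
    have hg : HasDerivAt (fun z => Complex.I * lam⁻¹ * Complex.exp z)
        (Complex.I * lam⁻¹ * Complex.exp (u p)) (u p) :=
      (Complex.hasDerivAt_exp (u p)).const_mul _
    have hch := chainC u p (hu.differentiable (by simp) p) _ _ hg (1, 0)
    rw [hswap, psC, hfun, hch]
    have h1p := h1 p
    rw [psC] at h1p
    rw [show fderiv ℝ u p (1,0) = -Complex.I * lam * Complex.sinh (v p) from h1p]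
    field_simp [Complex.I_ne_zero]
    ring_nf
    rw [Complex.I_sq]
    ring
  -- splitting
  have hΩuv : Ω = fun q => u q + v q := by funext q; simp [hu_def, hv_def]; ring
  have hΨuv : Ψ = fun q => u q - v q := by funext q; simp [hu_def, hv_def]; ring
  have hpsU : Differentiable ℝ (psC u) :=
    (smooth_partial u hu (1,0)).differentiable (by simp)
  have hpsV : Differentiable ℝ (psC v) :=
    (smooth_partial v hv (1,0)).differentiable (by simp)
  have hdu : Differentiable ℝ u := hu.differentiable (by simp)
  have hdv : Differentiable ℝ v := hv.differentiable (by simp)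
  have hΩsplit : ∀ p, pnC (psC Ω) p = pnC (psC u) p + pnC (psC v) p := by
    intro p
    have hfun : psC Ω = fun q => psC u q + psC v q := by
      funext q
      rw [hΩuv]
      simp only [psC]
      rw [fderiv_fun_add (hdu q) (hdv q)]
      rfl
    rw [pnC, hfun]
    rw [fderiv_fun_add (hpsU p) (hpsV p)]
    rfl
  have hΨsplit : ∀ p, pnC (psC Ψ) p = pnC (psC u) p - pnC (psC v) p := by
    intro p
    have hfun : psC Ψ = fun q => psC u q - psC v q := by
      funext q
      rw [hΨuv]
      simp only [psC]
      rw [fderiv_fun_sub (hdu q) (hdv q)]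
      rfl
    rw [pnC, hfun]
    rw [fderiv_fun_sub (hpsU p) (hpsV p)]
    rfl
  constructor
  · intro p
    rw [hΩsplit p, keyU p, keyV p, ← add_mul, Complex.cosh_add_sinh, ← Complex.exp_add]
    congr 1
    rw [hΩuv]; ring
  · intro p
    rw [hΨsplit p, keyU p, keyV p, ← sub_mul, Complex.cosh_sub_sinh, ← Complex.exp_add]
    congr 1
    rw [hΨuv]; ring

end
end
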